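/- For every natural number n and every x ∈ ℝ, the physicists' Hermite polynomial H_n satisfies H_n''(x)·H_n(x) ≤ H_n'(x)² + H_n(x)². Equivalently, in terms of the probabilists' Hermite polynomials He_n (via H_n(x) = 2^{n/2}·He_n(√2·x)): 2·He_n''(y)·He_n(y) ≤ 2·He_n'(y)² + He_n(y)² for all y ∈ ℝ. Consequently the Fock-state wavefunctions ψ_n(x) = N_n e^{−x²/2} H_n(x) have log-concave amplitude wherever H_n ≠ 0, so Fock states do not violate the objective-realism inequality. -/

import Mathlib

/-!
From `He_{n+1}' = (n+1) He_n` and the three-term recurrence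
`He_{n+2} = x He_{n+1} - (n+1) He_n` one gets the Turán inequality
`He_n He_{n+2} ≤ He_{n+1}²` by induction, since
`He_{n+2}² - He_{n+3} He_{n+1} = (n+1)(He_{n+1}² - He_{n+2} He_n) + He_{n+1}²`.
Hence `He_n'' He_n = n(n-1) He_{n-2} He_n ≤ n(n-1) He_{n-1}² ≤ He_n'²`, and this
Laguerre-type inequality `f'' f ≤ f'²` survives the rescaling `x ↦ c f(a x)` that turns
`He_n` into `H_n`.
-/

/-- The probabilists' Hermite polynomial `He_n` evaluated at a real point. -/
noncomputable def He (n : ℕ) (y : ℝ) : ℝ := Polynomial.aeval y (Polynomial.hermite n)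

/-- The physicists' Hermite polynomial `H_n(x) = 2^{n/2}·He_n(√2·x)`. -/
noncomputable def Hphys (n : ℕ) (x : ℝ) : ℝ := 2 ^ ((n : ℝ) / 2) * He n (Real.sqrt 2 * x)

open Polynomial

theorem Polynomial.derivative_hermite_succ :
    ∀ n : ℕ, derivative (hermite (n + 1)) = ((n : ℤ[X]) + 1) * hermite n
  | 0 => by simp
  | n + 1 => by
    have h_deriv : derivative (hermite n) = X * hermite n - hermite (n + 1) := by
      rw [hermite_succ]; ring
    rw [hermite_succ (n + 1), derivative_sub, derivative_mul, derivative_X,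
      derivative_hermite_succ n, derivative_mul, derivative_add, derivative_natCast,
      derivative_one, h_deriv]
    push_cast
    ring

theorem Polynomial.hermite_succ_succ (n : ℕ) :
    hermite (n + 2) = X * hermite (n + 1) - ((n : ℤ[X]) + 1) * hermite n := by
  rw [hermite_succ (n + 1), derivative_hermite_succ]

theorem He_zero : He 0 = fun _ => 1 := by
  funext y; simp [He]

theorem He_one (y : ℝ) : He 1 y = y := by
  simp [He]

theorem He_succ_succ (n : ℕ) (y : ℝ) :
    He (n + 2) y = y * He (n + 1) y - ((n : ℝ) + 1) * He n y := by
  simp only [He, hermite_succ_succ, map_sub, map_mul, map_add, map_natCast, map_one, aeval_X]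

theorem deriv_He_succ (n : ℕ) : deriv (He (n + 1)) = fun y => ((n : ℝ) + 1) * He n y := by
  funext y
  change deriv (fun y => aeval y (hermite (n + 1))) y = _
  rw [Polynomial.deriv_aeval, derivative_hermite_succ]
  simp [He]

theorem He_mul_He_add_two_le_sq (n : ℕ) (y : ℝ) : He n y * He (n + 2) y ≤ He (n + 1) y ^ 2 := by
  induction n with
  | zero =>
    rw [He_succ_succ, He_one, He_zero]
    nlinarith
  | succ m ih =>
    have h_step : He (m + 2) y ^ 2 - He (m + 1) y * He (m + 3) y
        = ((m : ℝ) + 1) * (He (m + 1) y ^ 2 - He m y * He (m + 2) y) + He (m + 1) y ^ 2 := by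
      rw [He_succ_succ (m + 1), He_succ_succ m]; push_cast; ring
    have h_prev : 0 ≤ ((m : ℝ) + 1) * (He (m + 1) y ^ 2 - He m y * He (m + 2) y) :=
      mul_nonneg (by positivity) (by linarith)
    linarith [sq_nonneg (He (m + 1) y)]

theorem deriv_deriv_He_mul_le_sq (n : ℕ) (y : ℝ) :
    deriv (deriv (He n)) y * He n y ≤ deriv (He n) y ^ 2 := by
  match n with
  | 0 => simp [He_zero]
  | 1 => simp [deriv_He_succ, He_zero]
  | m + 2 =>
    have h_deriv : deriv (He (m + 2)) = fun y => ((m : ℝ) + 2) * He (m + 1) y := by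
      rw [deriv_He_succ]; push_cast; ring_nf
    rw [h_deriv, deriv_const_mul_field', deriv_He_succ]
    calc (m + 2) * ((m + 1) * He m y) * He (m + 2) y
        = ((m : ℝ) + 2) * (m + 1) * (He m y * He (m + 2) y) := by ring
      _ ≤ ((m : ℝ) + 2) * (m + 1) * He (m + 1) y ^ 2 := by gcongr; exact He_mul_He_add_two_le_sq m y
      _ ≤ ((m : ℝ) + 2) * (m + 2) * He (m + 1) y ^ 2 := by gcongr; linarith
      _ = ((m + 2) * He (m + 1) y) ^ 2 := by ring

theorem deriv_const_mul_comp_mul_left (f : ℝ → ℝ) (c a : ℝ) :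
    deriv (fun x => c * f (a * x)) = fun x => c * a * deriv f (a * x) := by
  funext x
  rw [deriv_const_mul_field, deriv_comp_mul_left (f := f), smul_eq_mul, mul_assoc]

theorem deriv_deriv_mul_le_sq_comp_mul_left {f : ℝ → ℝ}
    (hf : ∀ y, deriv (deriv f) y * f y ≤ deriv f y ^ 2) (c a x : ℝ) :
    deriv (deriv fun x => c * f (a * x)) x * (c * f (a * x))
      ≤ deriv (fun x => c * f (a * x)) x ^ 2 := by
  rw [deriv_const_mul_comp_mul_left, deriv_const_mul_comp_mul_left]
  calc c * a * a * deriv (deriv f) (a * x) * (c * f (a * x))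
      = (c * a) ^ 2 * (deriv (deriv f) (a * x) * f (a * x)) := by ring
    _ ≤ (c * a) ^ 2 * deriv f (a * x) ^ 2 := by gcongr; exact hf _
    _ = (c * a * deriv f (a * x)) ^ 2 := by ring

/-- For every `n` and `x`, `H_n''(x)·H_n(x) ≤ H_n'(x)² + H_n(x)²`; equivalently, in terms of
the probabilists' Hermite polynomials, `2·He_n''(y)·He_n(y) ≤ 2·He_n'(y)² + He_n(y)²`.
Hence the Fock-state amplitudes are log-concave wherever `H_n ≠ 0`. -/
theorem stmt_18 :
    (∀ (n : ℕ) (x : ℝ),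
      deriv (deriv (Hphys n)) x * Hphys n x ≤ (deriv (Hphys n) x) ^ 2 + (Hphys n x) ^ 2) ∧
    (∀ (n : ℕ) (y : ℝ),
      2 * (deriv (deriv (He n)) y * He n y) ≤ 2 * (deriv (He n) y) ^ 2 + (He n y) ^ 2) := by
  refine ⟨fun n x => ?_, fun n y => ?_⟩
  · have h_laguerre := deriv_deriv_mul_le_sq_comp_mul_left (deriv_deriv_He_mul_le_sq n)
      (2 ^ ((n : ℝ) / 2)) (Real.sqrt 2) x
    exact h_laguerre.trans (le_add_of_nonneg_right (sq_nonneg _))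
  · linarith [deriv_deriv_He_mul_le_sq n y, sq_nonneg (He n y)]
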